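/- arXiv:1408.2117 — 4 statements merged into one kernel-verified Lean document; each statement's English description precedes it below -/
import Mathlib

section
/- If [v0, v1, v2] is a path in a stable tree T marked by X (v0, v1, v2 distinct vertices with v1 adjacent to both v0 and v2), then B_{v1}(v2) ∩ X is a strict subset of B_{v0}(v1) ∩ X. -/
open SimpleGraph

/-- The branch of a vertex `v` in the direction of a neighbor `u`. -/
def Branch {V : Type*} (G : SimpleGraph V) (v u : V) : Set V :=
  {w | ∃ p : G.Walk u w, v ∉ p.support}

/-- A stable combinatorial tree marked by `X`. -/
structure MarkedStableTree (X V : Type*) (G : SimpleGraph V) (m : X → V) : Prop where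
  tree : G.IsTree
  inj : Function.Injective m
  leaf_iff : ∀ v, (G.neighborSet v).ncard = 1 ↔ v ∈ Set.range m
  stable : ∀ v, v ∉ Set.range m → 3 ≤ (G.neighborSet v).ncard

/-! In a tree the branches at a vertex `v` are pairwise disjoint, so the branch `B_{v₁}(v₂)`
sits inside `B_{v₀}(v₁)` and misses the branch `B_{v₁}(u)` through a third neighbour `u` of `v₁`,
which exists by stability. That third branch is itself contained in `B_{v₀}(v₁)`, and it contains
a marked leaf: following neighbours away from `v₁` strictly shrinks the branch, so in a finite
tree this descent ends at a leaf. -/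

section

variable {V : Type*} {G : SimpleGraph V}

theorem mem_branch_of_adj {v u : V} (h : G.Adj v u) : u ∈ Branch G v u :=
  ⟨.nil, by simp [h.ne]⟩

theorem notMem_branch_self (v u : V) : v ∉ Branch G v u :=
  fun ⟨p, hp⟩ => hp p.end_mem_support

theorem mem_branch_of_mem_support {v u w a : V} (p : G.Walk u w) (hp : v ∉ p.support)
    (ha : a ∈ p.support) : a ∈ Branch G v u := by
  classical
  exact ⟨p.takeUntil a ha, fun hv => hp (p.support_takeUntil_subset_support ha hv)⟩

theorem SimpleGraph.IsAcyclic.disjoint_branch (hG : G.IsAcyclic) {v u u' : V}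
    (hu : G.Adj v u) (hu' : G.Adj v u') (hne : u ≠ u') :
    Disjoint (Branch G v u) (Branch G v u') := by
  classical
  refine Set.disjoint_left.2 fun w ⟨p, hp⟩ ⟨p', hp'⟩ => hne ?_
  have hpath : (Walk.cons hu p.bypass).IsPath := (Walk.cons_isPath_iff _ _).2
    ⟨p.bypass_isPath, fun h => hp (p.support_bypass_subset_support h)⟩
  have hpath' : (Walk.cons hu' p'.bypass).IsPath := (Walk.cons_isPath_iff _ _).2
    ⟨p'.bypass_isPath, fun h => hp' (p'.support_bypass_subset_support h)⟩
  -- the unique `v`-`w` path has a single second vertex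
  have heq := (hG.subsingleton_path v w).elim ⟨_, hpath⟩ ⟨_, hpath'⟩
  simpa using congrArg (fun P : G.Path v w => P.1.getVert 1) heq

theorem SimpleGraph.IsAcyclic.branch_subset_branch (hG : G.IsAcyclic) {a b c : V}
    (hab : G.Adj a b) (hbc : G.Adj b c) (hac : a ≠ c) : Branch G b c ⊆ Branch G a b := by
  rintro w ⟨p, hp⟩
  refine ⟨.cons hbc p, ?_⟩
  simp only [Walk.support_cons, List.mem_cons, not_or]
  exact ⟨hab.ne, fun ha => Set.disjoint_left.1 (hG.disjoint_branch hbc hab.symm hac.symm)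
    (mem_branch_of_mem_support p hp ha) (mem_branch_of_adj hab.symm)⟩

theorem SimpleGraph.IsAcyclic.branch_ssubset_branch (hG : G.IsAcyclic) {a b c : V}
    (hab : G.Adj a b) (hbc : G.Adj b c) (hac : a ≠ c) : Branch G b c ⊂ Branch G a b :=
  ⟨hG.branch_subset_branch hab hbc hac,
    fun h => notMem_branch_self b c (h (mem_branch_of_adj hab))⟩

namespace MarkedStableTree

variable {X : Type*} {m : X → V}

theorem exists_mem_branch [Finite V] (h : MarkedStableTree X V G m) {v u : V}
    (hvu : G.Adj v u) : ∃ x, m x ∈ Branch G v u := by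
  by_cases hu : u ∈ Set.range m
  · obtain ⟨x, rfl⟩ := hu
    exact ⟨x, mem_branch_of_adj hvu⟩
  have hlt : ({v} : Set V).ncard < (G.neighborSet u).ncard := by
    have := h.stable u hu
    rw [Set.ncard_singleton]
    omega
  obtain ⟨u', hu', hu'v⟩ := Set.exists_mem_notMem_of_ncard_lt_ncard hlt
  have hne : v ≠ u' := Ne.symm hu'v
  have : (Branch G u u').ncard < (Branch G v u).ncard :=
    Set.ncard_lt_ncard (h.tree.isAcyclic.branch_ssubset_branch hvu hu' hne)
  obtain ⟨x, hx⟩ := h.exists_mem_branch hu'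
  exact ⟨x, h.tree.isAcyclic.branch_subset_branch hvu hu' hne hx⟩
termination_by (Branch G v u).ncard

theorem three_le_ncard_neighborSet [Finite V] (h : MarkedStableTree X V G m) {v a b : V}
    (ha : G.Adj v a) (hb : G.Adj v b) (hab : a ≠ b) : 3 ≤ (G.neighborSet v).ncard := by
  refine h.stable v fun hv => ?_
  have hpair : ({a, b} : Set V).ncard ≤ (G.neighborSet v).ncard :=
    Set.ncard_le_ncard (Set.insert_subset_iff.2 ⟨ha, Set.singleton_subset_iff.2 hb⟩)
  rw [Set.ncard_pair hab, (h.leaf_iff v).2 hv] at hpair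
  omega

end MarkedStableTree

end

theorem branch_trace_strict_mono_general {X V : Type*} [Finite V]
    (G : SimpleGraph V) (m : X → V) (h : MarkedStableTree X V G m)
    (v0 v1 v2 : V)
    (h01 : G.Adj v0 v1) (h12 : G.Adj v1 v2) (h02 : v0 ≠ v2) :
    {x : X | m x ∈ Branch G v1 v2} ⊂ {x : X | m x ∈ Branch G v0 v1} := by
  have hT := h.tree.isAcyclic
  refine ⟨fun x hx => hT.branch_subset_branch h01 h12 h02 hx, fun hsub => ?_⟩
  have hlt : ({v0, v2} : Set V).ncard < (G.neighborSet v1).ncard := by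
    have := h.three_le_ncard_neighborSet h01.symm h12 h02
    rw [Set.ncard_pair h02]
    omega
  obtain ⟨u, hu, hu02⟩ := Set.exists_mem_notMem_of_ncard_lt_ncard hlt
  simp only [Set.mem_insert_iff, Set.mem_singleton_iff, not_or] at hu02
  obtain ⟨x, hx⟩ := h.exists_mem_branch hu
  exact Set.disjoint_left.1 (hT.disjoint_branch hu h12 hu02.2) hx
    (hsub (hT.branch_subset_branch h01 hu (Ne.symm hu02.1) hx))

/-- if `[v0, v1, v2]` is a path in a stable tree marked by `X`, then
`B_{v1}(v2) ∩ X` is a strict subset of `B_{v0}(v1) ∩ X`. -/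
theorem branch_trace_strict_mono {X V : Type*} [Finite X] [Finite V]
    (G : SimpleGraph V) (m : X → V) (h : MarkedStableTree X V G m)
    (hX : 3 ≤ Nat.card X) (v0 v1 v2 : V)
    (h01 : G.Adj v0 v1) (h12 : G.Adj v1 v2) (h02 : v0 ≠ v2) :
    {x : X | m x ∈ Branch G v1 v2} ⊂ {x : X | m x ∈ Branch G v0 v1} :=
  branch_trace_strict_mono_general G m h v0 v1 v2 h01 h12 h02
end

section
/- Every admissible set of partitions 𝒫 of X arises as ψ(T) for some stable tree T marked by X; concretely, the graph with vertex set 𝒫 ∪ X, with an edge between P1, P2 ∈ 𝒫 whenever there exist blocks B1 ∈ P1 and B2 ∈ P2 with B1 ∪ B2 = X and B1 ∩ B2 = ∅, and with an edge between P0 ∈ 𝒫 and x ∈ X whenever {x} ∈ P0, is a stable tree marked by X whose induced set of branch partitions equals 𝒫. -/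
/-!
Label each dart `v → u` of the plumbing graph by the block of `v` facing `u`. Reversing a dart
complements its label, and the labels of the darts leaving a partition are its distinct blocks, so
the label strictly shrinks along every walk that never turns back: the graph has no cycles.
Descending from a block `B ∋ x` to the partition containing `Bᶜ` lands in a strictly smaller block
around `x`, so every partition reaches every leaf: the graph is connected. In the resulting tree the
marks beyond `u` seen from `v` are exactly the label of `v → u`, so the branch partition at the
vertex of `P` is `P` itself.
-/

open SimpleGraph

/-- The partition `P_v^X` of `X` induced by the branches at a vertex `v`. -/
def blockPartition {X V : Type*} (G : SimpleGraph V) (m : X → V) (v : V) : Set (Set X) :=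
  {B | ∃ u, G.Adj v u ∧ B = {x : X | m x ∈ Branch G v u}}

/-- `ψ(T)`: the set of partitions of `X` induced at the internal vertices of `T`. -/
def psi {X V : Type*} (G : SimpleGraph V) (m : X → V) : Set (Set (Set X)) :=
  {P | ∃ v, v ∉ Set.range m ∧ P = blockPartition G m v}

/-- Admissibility of a set of partitions of `X`. -/
def Admissible {X : Type*} (Ps : Set (Set (Set X))) : Prop :=
  (∀ P ∈ Ps, 3 ≤ P.ncard) ∧
  (∀ P ∈ Ps, ∀ B ∈ P, (∃ x : X, B = {x}) ∨ ∃ P' ∈ Ps, Bᶜ ∈ P') ∧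
  (∀ P ∈ Ps, ∀ P' ∈ Ps, P ≠ P' → P ∩ P' = ∅)

/-- The plumbing graph associated to a set `Ps` of partitions of `X`: vertices are
the partitions in `Ps` together with the elements of `X`; two partitions are joined
whenever they have a pair of complementary blocks, and a partition `P` is joined to
`x ∈ X` whenever `{x}` is a block of `P`. -/
def plumbingGraph {X : Type*} (Ps : Set (Set (Set X))) :
    SimpleGraph ({P // P ∈ Ps} ⊕ X) :=
  SimpleGraph.fromRel (fun v w =>
    match v, w with
    | Sum.inl P1, Sum.inl P2 =>
        ∃ B1 ∈ (P1 : Set (Set X)), ∃ B2 ∈ (P2 : Set (Set X)),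
          B1 ∪ B2 = Set.univ ∧ B1 ∩ B2 = ∅
    | Sum.inl P, Sum.inr x => ({x} : Set X) ∈ (P : Set (Set X))
    | Sum.inr _, _ => False)

namespace SimpleGraph

variable {V : Type*}

/-- Think of `f v u` as what lies beyond `u` when looking from `v`. -/
def ForwardDecreasing {α : Type*} [PartialOrder α] (G : SimpleGraph V) (f : V → V → α) : Prop :=
  ∀ ⦃u v w⦄, G.Adj u v → G.Adj v w → u ≠ w → f v w < f u v

variable {G : SimpleGraph V}

namespace ForwardDecreasing

variable {α : Type*} [PartialOrder α] {f : V → V → α}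

theorem getVert_lt (hf : ForwardDecreasing G f) {a b : V} (p : G.Walk a b)
    (hturn : ∀ i, i + 2 ≤ p.length → p.getVert i ≠ p.getVert (i + 2))
    {i j : ℕ} (hij : i < j) (hj : j < p.length) :
    f (p.getVert j) (p.getVert (j + 1)) < f (p.getVert i) (p.getVert (i + 1)) := by
  induction j, hij using Nat.le_induction with
  | base => exact hf (p.adj_getVert_succ (by omega)) (p.adj_getVert_succ hj) (hturn i (by omega))
  | succ j hij ih =>
    exact (hf (p.adj_getVert_succ (by omega)) (p.adj_getVert_succ hj) (hturn j (by omega))).trans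
      (ih (by omega))

theorem isAcyclic (hf : ForwardDecreasing G f) : G.IsAcyclic := by
  intro v c hc
  have hlen := hc.three_le_length
  have hturn : ∀ i, i + 2 ≤ c.length → c.getVert i ≠ c.getVert (i + 2) := fun i hi =>
    hc.getVert_sub_one_ne_getVert_add_one (i := i + 1) (by omega)
  have hnil : ¬ c.Nil := hc.not_nil
  have hdown := hf.getVert_lt c hturn (i := 0) (j := c.length - 1) (by omega) (by omega)
  rw [Nat.sub_add_cancel (by omega), c.getVert_length, c.getVert_zero] at hdown
  -- the turn at the base point closes the cycle
  have hwrap := hf (c.adj_penultimate hnil) (c.adj_snd hnil) hc.snd_ne_penultimate.symm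
  exact lt_asymm hdown hwrap

theorem le_of_isPath (hf : ForwardDecreasing G f) {a b : V} {p : G.Walk a b} (hp : p.IsPath)
    (hlen : 0 < p.length) : f p.penultimate b ≤ f a p.snd := by
  have hturn : ∀ i, i + 2 ≤ p.length → p.getVert i ≠ p.getVert (i + 2) := fun i hi h => by
    have := hp.getVert_injOn (by simp only [Set.mem_ofPred_eq]; omega)
      (by simp only [Set.mem_ofPred_eq]; omega) h
    omega
  rcases Nat.eq_zero_or_pos (p.length - 1) with h | h
  · rw [Walk.penultimate, Walk.snd, h, p.getVert_zero, p.getVert_of_length_le (by omega)]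
  · have := hf.getVert_lt p hturn h (by omega)
    rw [Nat.sub_add_cancel hlen, p.getVert_length, p.getVert_zero] at this
    exact this.le

end ForwardDecreasing

theorem exists_isPath_cons_of_mem_branch {v u w : V} (hu : G.Adj v u) (hw : w ∈ Branch G v u) :
    ∃ q : G.Walk u w, (Walk.cons hu q).IsPath := by
  classical
  obtain ⟨p, hp⟩ := hw
  exact ⟨p.bypass, (Walk.cons_isPath_iff _ _).2
    ⟨p.bypass_isPath, fun h => hp (p.support_bypass_subset_support h)⟩⟩

theorem Connected.exists_adj_mem_branch (hG : G.Connected) {v w : V} (hw : w ≠ v) :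
    ∃ u, G.Adj v u ∧ w ∈ Branch G v u := by
  obtain ⟨p, hp⟩ := (hG v w).exists_isPath
  cases p with
  | nil => exact absurd rfl hw
  | cons hu q => exact ⟨_, hu, q, ((Walk.cons_isPath_iff _ _).1 hp).2⟩

theorem ForwardDecreasing.mem_iff_mem_branch {X : Type*} {f : V → V → Set X}
    (hf : ForwardDecreasing G f) (hG : G.Connected) {m : X → V}
    (hm : ∀ x w, G.Adj w (m x) → x ∈ f w (m x)) {v : V} (hv : v ∉ Set.range m)
    (hdisj : ∀ u u', G.Adj v u → G.Adj v u' → u ≠ u' → Disjoint (f v u) (f v u'))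
    {u : V} (hu : G.Adj v u) (x : X) : x ∈ f v u ↔ m x ∈ Branch G v u := by
  have mem_of_mem_branch : ∀ u, G.Adj v u → m x ∈ Branch G v u → x ∈ f v u := by
    intro u hu hx
    obtain ⟨q, hq⟩ := exists_isPath_cons_of_mem_branch hu hx
    have hnil : ¬ (Walk.cons hu q).Nil := Walk.not_nil_cons
    have := hf.le_of_isPath hq (by simp)
    rw [Walk.snd_cons] at this
    exact this (hm x _ (Walk.adj_penultimate hnil))
  refine ⟨fun hx => ?_, mem_of_mem_branch u hu⟩
  obtain ⟨u', hu', hxu'⟩ := hG.exists_adj_mem_branch (w := m x) fun h => hv ⟨x, h⟩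
  by_cases he : u' = u
  · exact he ▸ hxu'
  · exact absurd hx (Set.disjoint_left.1 (hdisj u' u hu' hu he) (mem_of_mem_branch u' hu' hxu'))

end SimpleGraph

namespace Setoid.IsPartition

variable {X : Type*} {P Q : Set (Set X)} {B C : Set X}

theorem union_ne_univ (hP : IsPartition P) (h3 : 3 ≤ P.ncard) (hB : B ∈ P) (hC : C ∈ P) :
    B ∪ C ≠ Set.univ := by
  intro hBC
  obtain ⟨D, hD, hDB, hDC⟩ : ∃ D ∈ P, D ≠ B ∧ D ≠ C := by
    by_contra! h
    have hsub : P ⊆ {B, C} := fun D hD => by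
      by_cases hDB : D = B
      · exact Or.inl hDB
      · exact Or.inr (h D hD hDB)
    have := (Set.ncard_le_ncard hsub (Set.toFinite _)).trans (Set.ncard_insert_le B {C})
    rw [Set.ncard_singleton] at this
    omega
  obtain ⟨y, hy⟩ := nonempty_of_mem_partition hP hD
  rcases (hBC ▸ Set.mem_univ y : y ∈ B ∪ C) with hyB | hyC
  · exact Set.disjoint_left.1 (hP.pairwiseDisjoint hD hB hDB) hy hyB
  · exact Set.disjoint_left.1 (hP.pairwiseDisjoint hD hC hDC) hy hyC

theorem compl_notMem (hP : IsPartition P) (h3 : 3 ≤ P.ncard) (hB : B ∈ P) : Bᶜ ∉ P :=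
  fun hBc => hP.union_ne_univ h3 hB hBc (Set.union_compl_self B)

theorem compl_singleton_notMem (hP : IsPartition P) (h3 : 3 ≤ P.ncard) (x : X) : {x}ᶜ ∉ P := by
  intro hx
  obtain ⟨C, ⟨hC, hxC⟩, -⟩ := hP.2 x
  refine hP.union_ne_univ h3 hC hx (Set.eq_univ_of_forall fun y => ?_)
  by_cases hy : y = x
  · exact Or.inl (hy ▸ hxC)
  · exact Or.inr hy

theorem eq_of_compl_mem (hP : IsPartition P) (hQ : IsPartition Q) (h3 : 3 ≤ Q.ncard)
    (hB : B ∈ P) (hC : C ∈ P) (hBc : Bᶜ ∈ Q) (hCc : Cᶜ ∈ Q) : B = C := by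
  by_contra hne
  refine hQ.union_ne_univ h3 hBc hCc ?_
  have hdisj : Disjoint B C := hP.pairwiseDisjoint hB hC hne
  rw [← Set.compl_inter, hdisj.inter_eq, Set.compl_empty]

theorem exists_ssubset_of_compl_mem (hP : IsPartition P) (h3 : 3 ≤ P.ncard) (hBc : Bᶜ ∈ P)
    {x : X} (hx : x ∈ B) : ∃ C ∈ P, x ∈ C ∧ C ⊂ B := by
  obtain ⟨C, ⟨hC, hxC⟩, -⟩ := hP.2 x
  have hCB : C ≠ Bᶜ := fun h => (h ▸ hxC) hx
  have hsub : C ⊆ B := fun y hy => by_contra fun hyB =>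
    Set.disjoint_left.1 (hP.pairwiseDisjoint hC hBc hCB) hy hyB
  refine ⟨C, hC, hxC, hsub.ssubset_of_ne ?_⟩
  rintro rfl
  exact hP.compl_notMem h3 hC hBc

end Setoid.IsPartition

theorem Admissible.eq_of_mem_of_mem {X : Type*} {Ps : Set (Set (Set X))} (h : Admissible Ps)
    {P Q : Set (Set X)} {B : Set X} (hP : P ∈ Ps) (hQ : Q ∈ Ps) (hBP : B ∈ P) (hBQ : B ∈ Q) :
    P = Q := by
  by_contra hne
  exact Set.eq_empty_iff_forall_notMem.1 (h.2.2 P hP Q hQ hne) B ⟨hBP, hBQ⟩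

namespace plumbingGraph

variable {X : Type*} {Ps : Set (Set (Set X))} {P Q : {P // P ∈ Ps}} {x y : X}

theorem adj_inl_inr : (plumbingGraph Ps).Adj (.inl P) (.inr x) ↔ {x} ∈ P.1 := by
  simp [plumbingGraph]

theorem adj_inr_inl : (plumbingGraph Ps).Adj (.inr x) (.inl P) ↔ {x} ∈ P.1 := by
  rw [adj_comm, adj_inl_inr]

theorem not_adj_inr_inr : ¬ (plumbingGraph Ps).Adj (.inr x) (.inr y) := by
  simp [plumbingGraph]

theorem adj_inl_inl (hpart : ∀ P ∈ Ps, Setoid.IsPartition P) (hadm : Admissible Ps) :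
    (plumbingGraph Ps).Adj (.inl P) (.inl Q) ↔ ∃ B ∈ P.1, Bᶜ ∈ Q.1 := by
  have hpair : ∀ S T : Set (Set X),
      (∃ B₁ ∈ S, ∃ B₂ ∈ T, B₁ ∪ B₂ = Set.univ ∧ B₁ ∩ B₂ = ∅) ↔ ∃ B ∈ S, Bᶜ ∈ T := fun S T =>
    ⟨fun ⟨B₁, h₁, B₂, h₂, hu, hi⟩ => ⟨B₁, h₁, (IsCompl.of_eq hi hu).compl_eq ▸ h₂⟩,
     fun ⟨B, hB, hBc⟩ => ⟨B, hB, Bᶜ, hBc, Set.union_compl_self B, Set.inter_compl_self B⟩⟩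
  simp only [plumbingGraph, fromRel_adj, ne_eq, Sum.inl.injEq, hpair]
  constructor
  · rintro ⟨-, h | ⟨B, hB, hBc⟩⟩
    · exact h
    · exact ⟨Bᶜ, hBc, (compl_compl B).symm ▸ hB⟩
  · rintro ⟨B, hB, hBc⟩
    refine ⟨fun hPQ => (hpart _ P.2).compl_notMem (hadm.1 _ P.2) hB ?_, Or.inl ⟨B, hB, hBc⟩⟩
    rwa [hPQ]

theorem eq_of_adj_inr (hadm : Admissible Ps) {u w : {P // P ∈ Ps} ⊕ X}
    (hu : (plumbingGraph Ps).Adj (.inr x) u) (hw : (plumbingGraph Ps).Adj (.inr x) w) : u = w := by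
  rcases u with Q | y <;> rcases w with R | z
  · exact congrArg _ (Subtype.ext (hadm.eq_of_mem_of_mem Q.2 R.2 (adj_inr_inl.1 hu)
      (adj_inr_inl.1 hw)))
  all_goals first | exact absurd hu not_adj_inr_inr | exact absurd hw not_adj_inr_inr

/-- The block of `v` facing its neighbour `u`, and `{x}ᶜ` at a leaf `x`; between two partitions the
union picks out the unique block `B` of `P` with `Bᶜ ∈ Q`. -/
def blockToward : {P // P ∈ Ps} ⊕ X → {P // P ∈ Ps} ⊕ X → Set X
  | _, .inr x => {x}
  | .inr x, .inl _ => {x}ᶜ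
  | .inl P, .inl Q => ⋃₀ {B ∈ P.1 | Bᶜ ∈ Q.1}

@[simp]
theorem blockToward_inr (v : {P // P ∈ Ps} ⊕ X) (x : X) : blockToward v (.inr x) = {x} := by
  cases v <;> rfl

theorem blockToward_inr_inl : blockToward (.inr x) (.inl P) = {x}ᶜ := rfl

theorem blockToward_inl_inl_eq (hpart : ∀ P ∈ Ps, Setoid.IsPartition P) (hadm : Admissible Ps)
    {B : Set X} (hB : B ∈ P.1) (hBc : Bᶜ ∈ Q.1) : blockToward (.inl P) (.inl Q) = B := by
  have hunique : {C ∈ P.1 | Cᶜ ∈ Q.1} = {B} := Set.eq_singleton_iff_unique_mem.2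
    ⟨⟨hB, hBc⟩, fun C hC => (hpart _ P.2).eq_of_compl_mem (hpart _ Q.2) (hadm.1 _ Q.2)
      hC.1 hB hC.2 hBc⟩
  rw [blockToward, hunique, Set.sUnion_singleton]

theorem blockToward_mem (hpart : ∀ P ∈ Ps, Setoid.IsPartition P) (hadm : Admissible Ps)
    {u : {P // P ∈ Ps} ⊕ X} (h : (plumbingGraph Ps).Adj (.inl P) u) :
    blockToward (.inl P) u ∈ P.1 := by
  rcases u with Q | x
  · obtain ⟨B, hB, hBc⟩ := (adj_inl_inl hpart hadm).1 h
    rwa [blockToward_inl_inl_eq hpart hadm hB hBc]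
  · rw [blockToward_inr]
    exact adj_inl_inr.1 h

theorem blockToward_swap (hpart : ∀ P ∈ Ps, Setoid.IsPartition P) (hadm : Admissible Ps)
    {v u : {P // P ∈ Ps} ⊕ X} (h : (plumbingGraph Ps).Adj v u) :
    blockToward u v = (blockToward v u)ᶜ := by
  rcases v with P | x <;> rcases u with Q | y
  · obtain ⟨B, hB, hBc⟩ := (adj_inl_inl hpart hadm).1 h
    rw [blockToward_inl_inl_eq hpart hadm hB hBc,
      blockToward_inl_inl_eq hpart hadm hBc ((compl_compl B).symm ▸ hB)]
  · rw [blockToward_inr, blockToward_inr_inl]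
  · rw [blockToward_inr, blockToward_inr_inl, compl_compl]
  · exact absurd h not_adj_inr_inr

theorem exists_adj_blockToward_eq (hpart : ∀ P ∈ Ps, Setoid.IsPartition P)
    (hadm : Admissible Ps) {B : Set X} (hB : B ∈ P.1) :
    ∃ u, (plumbingGraph Ps).Adj (.inl P) u ∧ blockToward (.inl P) u = B := by
  rcases hadm.2.1 _ P.2 B hB with ⟨x, rfl⟩ | ⟨Q, hQ, hBc⟩
  · exact ⟨.inr x, adj_inl_inr.2 hB, blockToward_inr _ _⟩
  · exact ⟨.inl ⟨Q, hQ⟩, (adj_inl_inl hpart hadm).2 ⟨B, hB, hBc⟩,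
      blockToward_inl_inl_eq hpart hadm hB hBc⟩

theorem compl_blockToward_mem (hpart : ∀ P ∈ Ps, Setoid.IsPartition P) (hadm : Admissible Ps)
    (h : (plumbingGraph Ps).Adj (.inl P) (.inl Q)) : (blockToward (.inl P) (.inl Q))ᶜ ∈ Q.1 :=
  blockToward_swap hpart hadm h ▸ blockToward_mem hpart hadm h.symm

theorem blockToward_injOn (hpart : ∀ P ∈ Ps, Setoid.IsPartition P) (hadm : Admissible Ps)
    (P : {P // P ∈ Ps}) :
    Set.InjOn (blockToward (.inl P)) ((plumbingGraph Ps).neighborSet (.inl P)) := by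
  intro u hu w hw h
  rcases u with Q | x <;> rcases w with R | y
  · have hQ := compl_blockToward_mem hpart hadm hu
    have hR := compl_blockToward_mem hpart hadm hw
    rw [← h] at hR
    exact congrArg _ (Subtype.ext (hadm.eq_of_mem_of_mem Q.2 R.2 hQ hR))
  · have hQ := compl_blockToward_mem hpart hadm hu
    rw [h, blockToward_inr] at hQ
    exact absurd hQ ((hpart _ Q.2).compl_singleton_notMem (hadm.1 _ Q.2) y)
  · have hR := compl_blockToward_mem hpart hadm hw
    rw [← h, blockToward_inr] at hR
    exact absurd hR ((hpart _ R.2).compl_singleton_notMem (hadm.1 _ R.2) x)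
  · simp only [blockToward_inr, Set.singleton_eq_singleton_iff] at h
    rw [h]

theorem image_blockToward_neighborSet (hpart : ∀ P ∈ Ps, Setoid.IsPartition P)
    (hadm : Admissible Ps) (P : {P // P ∈ Ps}) :
    blockToward (.inl P) '' (plumbingGraph Ps).neighborSet (.inl P) = P.1 := by
  ext B
  constructor
  · rintro ⟨u, hu, rfl⟩
    exact blockToward_mem hpart hadm hu
  · intro hB
    obtain ⟨u, hu, rfl⟩ := exists_adj_blockToward_eq hpart hadm hB
    exact ⟨u, hu, rfl⟩

theorem ncard_neighborSet_inl (hpart : ∀ P ∈ Ps, Setoid.IsPartition P) (hadm : Admissible Ps)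
    (P : {P // P ∈ Ps}) : ((plumbingGraph Ps).neighborSet (.inl P)).ncard = P.1.ncard := by
  rw [← (blockToward_injOn hpart hadm P).ncard_image, image_blockToward_neighborSet hpart hadm]

theorem forwardDecreasing_blockToward (hpart : ∀ P ∈ Ps, Setoid.IsPartition P)
    (hadm : Admissible Ps) : (plumbingGraph Ps).ForwardDecreasing blockToward := by
  intro u v w huv hvw huw
  rcases v with Q | x
  · have hu := blockToward_mem hpart hadm huv.symm
    have hw := blockToward_mem hpart hadm hvw
    have hne : blockToward (.inl Q) w ≠ blockToward (.inl Q) u :=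
      fun h => huw (blockToward_injOn hpart hadm Q hvw huv.symm h).symm
    rw [blockToward_swap hpart hadm huv.symm]
    have hdisj : Disjoint (blockToward (.inl Q) w) (blockToward (.inl Q) u) :=
      (hpart _ Q.2).pairwiseDisjoint hw hu hne
    refine (Set.subset_compl_iff_disjoint_right.2 hdisj).ssubset_of_ne fun h => ?_
    exact (hpart _ Q.2).union_ne_univ (hadm.1 _ Q.2) hu hw (by rw [h, Set.union_compl_self])
  · exact absurd (eq_of_adj_inr hadm huv.symm hvw) huw

theorem reachable_inl_inr [Finite X] (hpart : ∀ P ∈ Ps, Setoid.IsPartition P)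
    (hadm : Admissible Ps) (P : {P // P ∈ Ps}) (x : X) :
    (plumbingGraph Ps).Reachable (.inl P) (.inr x) := by
  obtain ⟨B, ⟨hB, hxB⟩, -⟩ := (hpart _ P.2).2 x
  induction B using WellFoundedLT.induction generalizing P with
  | _ B ih =>
    rcases hadm.2.1 _ P.2 B hB with ⟨y, rfl⟩ | ⟨Q, hQ, hBc⟩
    · rw [Set.mem_singleton_iff.1 hxB]
      exact (adj_inl_inr.2 hB).reachable
    · obtain ⟨C, hC, hxC, hCB⟩ := (hpart Q hQ).exists_ssubset_of_compl_mem (hadm.1 Q hQ) hBc hxB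
      exact ((adj_inl_inl hpart hadm).2 ⟨B, hB, hBc⟩).reachable.trans (ih C hCB ⟨Q, hQ⟩ hC hxC)

theorem connected [Finite X] (hpart : ∀ P ∈ Ps, Setoid.IsPartition P) (hadm : Admissible Ps)
    (hne : Ps.Nonempty) : (plumbingGraph Ps).Connected := by
  obtain ⟨P₀, hP₀⟩ := hne
  have hreach : ∀ v, (plumbingGraph Ps).Reachable (.inl ⟨P₀, hP₀⟩) v := by
    rintro (P | x)
    · obtain ⟨B, hB⟩ := Set.nonempty_of_ncard_ne_zero (s := P.1) (by have := hadm.1 _ P.2; omega)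
      obtain ⟨x, -⟩ := Setoid.nonempty_of_mem_partition (hpart _ P.2) hB
      exact (reachable_inl_inr hpart hadm _ x).trans (reachable_inl_inr hpart hadm P x).symm
    · exact reachable_inl_inr hpart hadm _ x
  exact (connected_iff _).2 ⟨fun v w => (hreach v).symm.trans (hreach w), ⟨.inl ⟨P₀, hP₀⟩⟩⟩

theorem isTree [Finite X] (hpart : ∀ P ∈ Ps, Setoid.IsPartition P) (hadm : Admissible Ps)
    (hne : Ps.Nonempty) : (plumbingGraph Ps).IsTree :=
  ⟨connected hpart hadm hne, (forwardDecreasing_blockToward hpart hadm).isAcyclic⟩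

theorem ncard_neighborSet_inr [Finite X] (hpart : ∀ P ∈ Ps, Setoid.IsPartition P)
    (hadm : Admissible Ps) (hne : Ps.Nonempty) (x : X) :
    ((plumbingGraph Ps).neighborSet (.inr x)).ncard = 1 := by
  obtain ⟨P, hP⟩ := hne
  obtain ⟨p⟩ := reachable_inl_inr hpart hadm ⟨P, hP⟩ x
  have hu := (p.adj_penultimate (Walk.not_nil_of_ne Sum.inl_ne_inr)).symm
  exact Set.ncard_eq_one.2 ⟨_, Set.eq_singleton_iff_unique_mem.2
    ⟨hu, fun w hw => eq_of_adj_inr hadm hw hu⟩⟩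

theorem blockPartition_inl [Finite X] (hpart : ∀ P ∈ Ps, Setoid.IsPartition P)
    (hadm : Admissible Ps) (hne : Ps.Nonempty) (P : {P // P ∈ Ps}) :
    blockPartition (plumbingGraph Ps) Sum.inr (.inl P) = P.1 := by
  have hbranch : ∀ u, (plumbingGraph Ps).Adj (.inl P) u →
      {x | .inr x ∈ Branch (plumbingGraph Ps) (.inl P) u} = blockToward (.inl P) u := by
    intro u hu
    ext x
    refine ((forwardDecreasing_blockToward hpart hadm).mem_iff_mem_branch
      (connected hpart hadm hne) (by simp) (by simp) (fun w w' hw hw' hww' => ?_) hu x).symm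
    exact (hpart _ P.2).pairwiseDisjoint (blockToward_mem hpart hadm hw)
      (blockToward_mem hpart hadm hw') fun h => hww' (blockToward_injOn hpart hadm P hw hw' h)
  rw [← image_blockToward_neighborSet hpart hadm P]
  ext B
  constructor
  · rintro ⟨u, hu, rfl⟩
    exact ⟨u, hu, (hbranch u hu).symm⟩
  · rintro ⟨u, hu, rfl⟩
    exact ⟨u, hu, (hbranch u hu).symm⟩

theorem psi_eq [Finite X] (hpart : ∀ P ∈ Ps, Setoid.IsPartition P) (hadm : Admissible Ps)
    (hne : Ps.Nonempty) : psi (plumbingGraph Ps) Sum.inr = Ps := by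
  ext P
  constructor
  · rintro ⟨(Q | x), hv, rfl⟩
    · rw [blockPartition_inl hpart hadm hne]
      exact Q.2
    · exact absurd ⟨x, rfl⟩ hv
  · intro hP
    exact ⟨.inl ⟨P, hP⟩, by simp, (blockPartition_inl hpart hadm hne ⟨P, hP⟩).symm⟩

end plumbingGraph

open plumbingGraph in
theorem admissible_is_realized_general {X : Type*} [Finite X]
    (Ps : Set (Set (Set X))) (hne : Ps.Nonempty)
    (hpart : ∀ P ∈ Ps, Setoid.IsPartition P) (hadm : Admissible Ps) :
    MarkedStableTree X ({P // P ∈ Ps} ⊕ X) (plumbingGraph Ps) Sum.inr ∧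
    psi (plumbingGraph Ps) (Sum.inr : X → {P // P ∈ Ps} ⊕ X) = Ps := by
  have h3 : ∀ P : {P // P ∈ Ps}, 3 ≤ ((plumbingGraph Ps).neighborSet (.inl P)).ncard :=
    fun P => (ncard_neighborSet_inl hpart hadm P).symm ▸ hadm.1 _ P.2
  refine ⟨⟨isTree hpart hadm hne, Sum.inr_injective, ?_, ?_⟩, psi_eq hpart hadm hne⟩
  · rintro (P | x)
    · have := h3 P
      simp only [Set.mem_range, reduceCtorEq, exists_false, iff_false]
      omega
    · exact iff_of_true (ncard_neighborSet_inr hpart hadm hne x) ⟨x, rfl⟩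
  · rintro (P | x) hv
    · exact h3 P
    · exact absurd ⟨x, rfl⟩ hv

/-- every (nonempty) admissible set of partitions `Ps` of `X`, all of whose
members are genuine partitions of `X`, arises as `ψ(T)` for a stable tree `T` marked by
`X`; concretely, the plumbing graph on `Ps ⊕ X` is a stable tree marked by `X` (via
`Sum.inr`) whose induced set of branch partitions equals `Ps`. -/
theorem admissible_is_realized {X : Type*} [Finite X] (hX : 3 ≤ Nat.card X)
    (Ps : Set (Set (Set X))) (hne : Ps.Nonempty)
    (hpart : ∀ P ∈ Ps, Setoid.IsPartition P) (hadm : Admissible Ps) :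
    MarkedStableTree X ({P // P ∈ Ps} ⊕ X) (plumbingGraph Ps) Sum.inr ∧
    psi (plumbingGraph Ps) (Sum.inr : X → {P // P ∈ Ps} ⊕ X) = Ps :=
  admissible_is_realized_general Ps hne hpart hadm
end

section
/- Let (M_n) be a sequence of Möbius transformations of P¹(ℂ) that converges pointwise at three fixed distinct points z0, z1, z∞ to three distinct limits w0, w1, w∞. Then (M_n) converges locally uniformly on P¹(ℂ) to the unique Möbius transformation M with M(z0)=w0, M(z1)=w1, M(z∞)=w∞. -/
/-!
Normalize each `M n` to a matrix `G n` of norm one. A limit `A` of a subsequence of `(G n)` is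
nonzero, and it is invertible: a singular `A ≠ 0` sends all but at most one of `z0, z1, z2` to a
single point, while `w0, w1, w2` are distinct. So `A` induces a Möbius map sending each `zᵢ` to
`wᵢ`; it is the only one, since for two such maps `v ↦ det (A v, B v)` is a binary quadratic form
with three independent zeros. The chordal distance of `[u]` and `[v]` is
`2 |det (u, v)| / (‖u‖ ‖v‖)`, continuous on pairs of nonzero vectors, so compactness of the unit
sphere of `ℂ²` turns `G n → A` into uniform convergence of the induced maps. Every subsequence of
`(M n)` thus has a further subsequence converging uniformly to the same limit, hence so does
`(M n)`.
-/

noncomputable section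

/-- The Möbius map `z ↦ (a z + b)/(c z + d)` on the Riemann sphere `P¹(ℂ)`,
modeled as `Option ℂ` (`none` being the point at infinity). -/
def moebiusMap (a b c d : ℂ) : Option ℂ → Option ℂ :=
  fun z => z.elim (if c = 0 then none else some (a / c))
    (fun w => if c * w + d = 0 then none else some ((a * w + b) / (c * w + d)))

/-- A map of the Riemann sphere is a Möbius transformation if it is induced by an
invertible `2 × 2` complex matrix. -/
def IsMoebius (φ : Option ℂ → Option ℂ) : Prop :=
  ∃ a b c d : ℂ, a * d - b * c ≠ 0 ∧ φ = moebiusMap a b c d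

/-- The chordal (spherical) metric on the Riemann sphere `P¹(ℂ) = Option ℂ`. -/
def chordal : Option ℂ → Option ℂ → ℝ := fun z w =>
  z.elim (w.elim 0 fun b => 2 / Real.sqrt (1 + ‖b‖ ^ 2))
    (fun a => w.elim (2 / Real.sqrt (1 + ‖a‖ ^ 2))
      (fun b => 2 * ‖a - b‖ /
        (Real.sqrt (1 + ‖a‖ ^ 2) * Real.sqrt (1 + ‖b‖ ^ 2))))

open Matrix Filter Topology

def proj (u : Fin 2 → ℂ) : Option ℂ := if u 1 = 0 then none else some (u 0 / u 1)

def homog : Option ℂ → Fin 2 → ℂ := fun z => z.elim ![1, 0] fun w => ![w, 1]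

def wedge (u v : Fin 2 → ℂ) : ℂ := u 0 * v 1 - u 1 * v 0

@[simp] lemma proj_homog (z : Option ℂ) : proj (homog z) = z := by
  cases z <;> simp [proj, homog]

lemma homog_ne_zero (z : Option ℂ) : homog z ≠ 0 := by
  cases z <;> simp [homog, funext_iff, Fin.forall_fin_two]

lemma proj_smul {t : ℂ} (ht : t ≠ 0) (u : Fin 2 → ℂ) : proj (t • u) = proj u := by
  simp [proj, ht, mul_div_mul_left _ _ ht]

lemma exists_eq_smul_homog_proj {u : Fin 2 → ℂ} (hu : u ≠ 0) :
    ∃ t : ℂ, t ≠ 0 ∧ u = t • homog (proj u) := by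
  by_cases h : u 1 = 0
  · refine ⟨u 0, fun h0 => hu (funext (Fin.forall_fin_two.2 ⟨h0, h⟩)), ?_⟩
    ext i
    fin_cases i <;> simp [proj, homog, h]
  · refine ⟨u 1, h, ?_⟩
    ext i
    fin_cases i <;> simp [proj, homog, h, mul_div_cancel₀]

lemma wedge_smul_smul (s t : ℂ) (u v : Fin 2 → ℂ) :
    wedge (s • u) (t • v) = s * t * wedge u v := by
  simp only [wedge, Pi.smul_apply, smul_eq_mul]
  ring

lemma wedge_self (u : Fin 2 → ℂ) : wedge u u = 0 := by
  rw [wedge, mul_comm, sub_self]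

lemma wedge_mulVec_mulVec (A : Matrix (Fin 2) (Fin 2) ℂ) (u v : Fin 2 → ℂ) :
    wedge (A *ᵥ u) (A *ᵥ v) = A.det * wedge u v := by
  simp only [wedge, mulVec, dotProduct, Fin.sum_univ_two, det_fin_two]
  ring

lemma wedge_homog_eq_zero_iff {z w : Option ℂ} : wedge (homog z) (homog w) = 0 ↔ z = w := by
  cases z <;> cases w <;> simp [wedge, homog, sub_eq_zero]

lemma proj_eq_proj_iff {u v : Fin 2 → ℂ} (hu : u ≠ 0) (hv : v ≠ 0) :
    proj u = proj v ↔ wedge u v = 0 := by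
  obtain ⟨s, hs, hsu⟩ := exists_eq_smul_homog_proj hu
  obtain ⟨t, ht, htv⟩ := exists_eq_smul_homog_proj hv
  rw [hsu, htv, wedge_smul_smul, proj_smul hs, proj_smul ht, proj_homog, proj_homog,
    mul_eq_zero, mul_eq_zero, wedge_homog_eq_zero_iff]
  simp [hs, ht]

lemma norm_toLp_homog (z : Option ℂ) :
    ‖WithLp.toLp 2 (homog z)‖ = z.elim 1 fun a => √(1 + ‖a‖ ^ 2) := by
  cases z <;> simp [EuclideanSpace.norm_eq, Fin.sum_univ_two, homog, add_comm]

lemma chordal_eq (z w : Option ℂ) :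
    chordal z w = 2 * ‖wedge (homog z) (homog w)‖ /
      (‖WithLp.toLp 2 (homog z)‖ * ‖WithLp.toLp 2 (homog w)‖) := by
  simp only [norm_toLp_homog]
  cases z <;> cases w <;> simp [chordal, wedge, homog]

lemma chordal_proj {u v : Fin 2 → ℂ} (hu : u ≠ 0) (hv : v ≠ 0) :
    chordal (proj u) (proj v) = 2 * ‖wedge u v‖ / (‖WithLp.toLp 2 u‖ * ‖WithLp.toLp 2 v‖) := by
  obtain ⟨s, hs, hsu⟩ := exists_eq_smul_homog_proj hu
  obtain ⟨t, ht, htv⟩ := exists_eq_smul_homog_proj hv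
  conv_rhs => rw [hsu, htv]
  rw [wedge_smul_smul, WithLp.toLp_smul, WithLp.toLp_smul, norm_smul, norm_smul, norm_mul,
    norm_mul, chordal_eq]
  have : ‖s‖ * ‖t‖ ≠ 0 := by simp [hs, ht]
  field_simp

lemma chordal_self (z : Option ℂ) : chordal z z = 0 := by
  rw [chordal_eq, wedge_self, norm_zero, mul_zero, zero_div]

lemma eq_of_chordal_eq_zero {z w : Option ℂ} (h : chordal z w = 0) : z = w := by
  have hpos (x : Option ℂ) : 0 < ‖WithLp.toLp 2 (homog x)‖ := by
    simpa using homog_ne_zero x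
  rw [chordal_eq, div_eq_zero_iff, mul_eq_zero, norm_eq_zero] at h
  rcases h with (h | h) | h
  · norm_num at h
  · exact wedge_homog_eq_zero_iff.1 h
  · exact absurd h (mul_pos (hpos z) (hpos w)).ne'

lemma continuousAt_chordal_proj {u v : Fin 2 → ℂ} (hu : u ≠ 0) (hv : v ≠ 0) :
    ContinuousAt (fun p : (Fin 2 → ℂ) × (Fin 2 → ℂ) => chordal (proj p.1) (proj p.2)) (u, v) := by
  have hne : ∀ᶠ p : (Fin 2 → ℂ) × (Fin 2 → ℂ) in 𝓝 (u, v), p.1 ≠ 0 ∧ p.2 ≠ 0 :=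
    (isOpen_ne.prod isOpen_ne).mem_nhds ⟨hu, hv⟩
  refine ContinuousAt.congr ?_ (hne.mono fun p hp => (chordal_proj hp.1 hp.2).symm)
  have hden : ‖WithLp.toLp 2 u‖ * ‖WithLp.toLp 2 v‖ ≠ 0 := by simp [hu, hv]
  exact ContinuousAt.div (by unfold wedge; fun_prop) (by fun_prop) hden

lemma proj_eq_of_tendsto_chordal {ι : Type*} {l : Filter ι} [l.NeBot] {v : ι → Fin 2 → ℂ}
    {u : Fin 2 → ℂ} (hv : Tendsto v l (𝓝 u)) (hu : u ≠ 0) {w : Option ℂ}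
    (h : Tendsto (fun i => chordal (proj (v i)) w) l (𝓝 0)) : proj u = w := by
  have hlim := ((continuousAt_chordal_proj hu (homog_ne_zero w)).tendsto.comp
    (hv.prodMk_nhds tendsto_const_nhds))
  simp only [Function.comp_def, proj_homog] at hlim
  exact eq_of_chordal_eq_zero (tendsto_nhds_unique hlim h)

-- Any norm on matrices would do: it only serves to normalize representatives into a compact set.
attribute [local instance] Matrix.normedAddCommGroup Matrix.normedSpace

def moebiusOfMatrix (A : Matrix (Fin 2) (Fin 2) ℂ) (z : Option ℂ) : Option ℂ :=
  proj (A *ᵥ homog z)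

lemma moebiusMap_eq_moebiusOfMatrix (a b c d : ℂ) :
    moebiusMap a b c d = moebiusOfMatrix !![a, b; c, d] := by
  funext z
  cases z <;> simp [moebiusMap, moebiusOfMatrix, proj, homog, mulVec, dotProduct, Fin.sum_univ_two]

lemma isMoebius_iff {f : Option ℂ → Option ℂ} :
    IsMoebius f ↔ ∃ A : Matrix (Fin 2) (Fin 2) ℂ, A.det ≠ 0 ∧ f = moebiusOfMatrix A := by
  constructor
  · rintro ⟨a, b, c, d, h, rfl⟩
    exact ⟨!![a, b; c, d], by rwa [det_fin_two_of], moebiusMap_eq_moebiusOfMatrix a b c d⟩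
  · rintro ⟨A, hA, rfl⟩
    refine ⟨A 0 0, A 0 1, A 1 0, A 1 1, by rwa [← det_fin_two], ?_⟩
    rw [moebiusMap_eq_moebiusOfMatrix, ← eta_fin_two]

lemma moebiusOfMatrix_smul {t : ℂ} (ht : t ≠ 0) (A : Matrix (Fin 2) (Fin 2) ℂ) :
    moebiusOfMatrix (t • A) = moebiusOfMatrix A := by
  funext z
  rw [moebiusOfMatrix, moebiusOfMatrix, smul_mulVec, proj_smul ht]

lemma IsMoebius.exists_norm_eq_one {f : Option ℂ → Option ℂ} (hf : IsMoebius f) :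
    ∃ A : Matrix (Fin 2) (Fin 2) ℂ, ‖A‖ = 1 ∧ f = moebiusOfMatrix A := by
  obtain ⟨A, hA, rfl⟩ := isMoebius_iff.1 hf
  have hA0 : A ≠ 0 := by
    rintro rfl
    simp at hA
  have ht : (‖A‖ : ℂ)⁻¹ ≠ 0 := by simpa using hA0
  exact ⟨(‖A‖ : ℂ)⁻¹ • A, norm_smul_inv_norm hA0, (moebiusOfMatrix_smul ht A).symm⟩

lemma mulVec_ne_zero_of_det_ne_zero {A : Matrix (Fin 2) (Fin 2) ℂ} (hA : A.det ≠ 0)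
    {u : Fin 2 → ℂ} (hu : u ≠ 0) : A *ᵥ u ≠ 0 :=
  fun h => hA (exists_mulVec_eq_zero_iff.1 ⟨u, hu, h⟩)

lemma eq_zero_of_mulVec_eq_zero {A : Matrix (Fin 2) (Fin 2) ℂ} {u v : Fin 2 → ℂ}
    (hu : A *ᵥ u = 0) (hv : A *ᵥ v = 0) (huv : wedge u v ≠ 0) : A = 0 := by
  ext i j
  have eu := congrFun hu i
  have ev := congrFun hv i
  simp only [mulVec, dotProduct, Fin.sum_univ_two, Pi.zero_apply] at eu ev
  have key : ∀ j, A i j * wedge u v = 0 := by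
    simp only [Fin.forall_fin_two, wedge]
    exact ⟨by linear_combination v 1 * eu - u 1 * ev, by linear_combination u 0 * ev - v 0 * eu⟩
  exact (mul_eq_zero.1 (key j)).resolve_right huv

lemma binary_quadratic_eq_zero {α β γ : ℂ} {u v w : Fin 2 → ℂ}
    (huv : wedge u v ≠ 0) (huw : wedge u w ≠ 0) (hvw : wedge v w ≠ 0)
    (hu : α * u 0 ^ 2 + β * (u 0 * u 1) + γ * u 1 ^ 2 = 0)
    (hv : α * v 0 ^ 2 + β * (v 0 * v 1) + γ * v 1 ^ 2 = 0)
    (hw : α * w 0 ^ 2 + β * (w 0 * w 1) + γ * w 1 ^ 2 = 0) :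
    α = 0 ∧ β = 0 ∧ γ = 0 := by
  -- Lagrange interpolation: each coefficient times `hD` is a combination of the three values.
  have hD : wedge u v * wedge u w * wedge v w ≠ 0 := mul_ne_zero (mul_ne_zero huv huw) hvw
  simp only [wedge] at hD
  refine ⟨(mul_eq_zero.1 (?_ : α * _ = 0)).resolve_right hD,
    (mul_eq_zero.1 (?_ : β * _ = 0)).resolve_right hD,
    (mul_eq_zero.1 (?_ : γ * _ = 0)).resolve_right hD⟩
  · linear_combination (v 1 * w 1 * (v 0 * w 1 - v 1 * w 0)) * hu -
      (u 1 * w 1 * (u 0 * w 1 - u 1 * w 0)) * hv + (u 1 * v 1 * (u 0 * v 1 - u 1 * v 0)) * hw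
  · linear_combination (-(v 0 * w 1 - v 1 * w 0) * (v 0 * w 1 + v 1 * w 0)) * hu +
      ((u 0 * w 1 - u 1 * w 0) * (u 0 * w 1 + u 1 * w 0)) * hv -
      ((u 0 * v 1 - u 1 * v 0) * (u 0 * v 1 + u 1 * v 0)) * hw
  · linear_combination (v 0 * w 0 * (v 0 * w 1 - v 1 * w 0)) * hu -
      (u 0 * w 0 * (u 0 * w 1 - u 1 * w 0)) * hv + (u 0 * v 0 * (u 0 * v 1 - u 1 * v 0)) * hw

lemma wedge_homog_ne_zero {z w : Option ℂ} (h : z ≠ w) : wedge (homog z) (homog w) ≠ 0 :=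
  mt wedge_homog_eq_zero_iff.1 h

lemma moebiusOfMatrix_eq_of_eq_on_three {A B : Matrix (Fin 2) (Fin 2) ℂ} (hA : A.det ≠ 0)
    (hB : B.det ≠ 0) {z0 z1 z2 : Option ℂ} (h01 : z0 ≠ z1) (h02 : z0 ≠ z2) (h12 : z1 ≠ z2)
    (e0 : moebiusOfMatrix A z0 = moebiusOfMatrix B z0)
    (e1 : moebiusOfMatrix A z1 = moebiusOfMatrix B z1)
    (e2 : moebiusOfMatrix A z2 = moebiusOfMatrix B z2) :
    moebiusOfMatrix A = moebiusOfMatrix B := by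
  set α := A 0 0 * B 1 0 - A 1 0 * B 0 0
  set β := A 0 0 * B 1 1 + A 0 1 * B 1 0 - A 1 0 * B 0 1 - A 1 1 * B 0 0
  set γ := A 0 1 * B 1 1 - A 1 1 * B 0 1
  have hq (v : Fin 2 → ℂ) :
      wedge (A *ᵥ v) (B *ᵥ v) = α * v 0 ^ 2 + β * (v 0 * v 1) + γ * v 1 ^ 2 := by
    simp only [wedge, mulVec, dotProduct, Fin.sum_univ_two, α, β, γ]
    ring
  have hiff (z : Option ℂ) :
      moebiusOfMatrix A z = moebiusOfMatrix B z ↔ wedge (A *ᵥ homog z) (B *ᵥ homog z) = 0 :=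
    proj_eq_proj_iff (mulVec_ne_zero_of_det_ne_zero hA (homog_ne_zero z))
      (mulVec_ne_zero_of_det_ne_zero hB (homog_ne_zero z))
  obtain ⟨hα, hβ, hγ⟩ := binary_quadratic_eq_zero (wedge_homog_ne_zero h01)
    (wedge_homog_ne_zero h02) (wedge_homog_ne_zero h12)
    ((hq _).symm.trans ((hiff z0).1 e0)) ((hq _).symm.trans ((hiff z1).1 e1))
    ((hq _).symm.trans ((hiff z2).1 e2))
  funext z
  rw [hiff, hq, hα, hβ, hγ]
  ring

lemma det_ne_zero_of_three_values {A : Matrix (Fin 2) (Fin 2) ℂ} (hA : A ≠ 0)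
    {z0 z1 z2 w0 w1 w2 : Option ℂ} (hz01 : z0 ≠ z1) (hz02 : z0 ≠ z2) (hz12 : z1 ≠ z2)
    (hw01 : w0 ≠ w1) (hw02 : w0 ≠ w2) (hw12 : w1 ≠ w2)
    (h0 : A *ᵥ homog z0 ≠ 0 → proj (A *ᵥ homog z0) = w0)
    (h1 : A *ᵥ homog z1 ≠ 0 → proj (A *ᵥ homog z1) = w1)
    (h2 : A *ᵥ homog z2 ≠ 0 → proj (A *ᵥ homog z2) = w2) :
    A.det ≠ 0 := by
  intro hdet
  -- a singular `A ≠ 0` kills at most one of the `homog zᵢ` and sends the others to one point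
  have same {u v : Fin 2 → ℂ} (hu : A *ᵥ u ≠ 0) (hv : A *ᵥ v ≠ 0) :
      proj (A *ᵥ u) = proj (A *ᵥ v) :=
    (proj_eq_proj_iff hu hv).2 (by rw [wedge_mulVec_mulVec, hdet, zero_mul])
  have kill {z z' : Option ℂ} (h : z ≠ z') (hz : A *ᵥ homog z = 0) : A *ᵥ homog z' ≠ 0 :=
    fun hz' => hA (eq_zero_of_mulVec_eq_zero hz hz' (wedge_homog_ne_zero h))
  by_cases hk0 : A *ᵥ homog z0 = 0
  · have hk1 := kill hz01 hk0
    have hk2 := kill hz02 hk0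
    exact hw12 (by rw [← h1 hk1, ← h2 hk2, same hk1 hk2])
  by_cases hk1 : A *ᵥ homog z1 = 0
  · have hk2 := kill hz12 hk1
    exact hw02 (by rw [← h0 hk0, ← h2 hk2, same hk0 hk2])
  · exact hw01 (by rw [← h0 hk0, ← h1 hk1, same hk0 hk1])

lemma exists_subseq_tendsto_of_three_points {G : ℕ → Matrix (Fin 2) (Fin 2) ℂ}
    (hG : ∀ n, ‖G n‖ = 1) {z0 z1 z2 w0 w1 w2 : Option ℂ}
    (hz01 : z0 ≠ z1) (hz02 : z0 ≠ z2) (hz12 : z1 ≠ z2)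
    (hw01 : w0 ≠ w1) (hw02 : w0 ≠ w2) (hw12 : w1 ≠ w2)
    (h0 : Tendsto (fun n => chordal (moebiusOfMatrix (G n) z0) w0) atTop (𝓝 0))
    (h1 : Tendsto (fun n => chordal (moebiusOfMatrix (G n) z1) w1) atTop (𝓝 0))
    (h2 : Tendsto (fun n => chordal (moebiusOfMatrix (G n) z2) w2) atTop (𝓝 0)) :
    ∃ A : Matrix (Fin 2) (Fin 2) ℂ, ∃ ψ : ℕ → ℕ, A.det ≠ 0 ∧ moebiusOfMatrix A z0 = w0 ∧
      moebiusOfMatrix A z1 = w1 ∧ moebiusOfMatrix A z2 = w2 ∧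
      Tendsto (G ∘ ψ) atTop (𝓝 A) := by
  obtain ⟨A, hA, ψ, hψ, hlim⟩ :=
    (isCompact_sphere (0 : Matrix (Fin 2) (Fin 2) ℂ) 1).tendsto_subseq (x := G) (by simpa using hG)
  have value {z w : Option ℂ}
      (h : Tendsto (fun n => chordal (moebiusOfMatrix (G n) z) w) atTop (𝓝 0))
      (hAz : A *ᵥ homog z ≠ 0) : proj (A *ᵥ homog z) = w :=
    proj_eq_of_tendsto_chordal
      (((continuous_id.matrix_mulVec continuous_const).tendsto A).comp hlim) hAz
      (h.comp hψ.tendsto_atTop)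
  have hdet : A.det ≠ 0 := det_ne_zero_of_three_values (ne_zero_of_mem_unit_sphere ⟨A, hA⟩)
    hz01 hz02 hz12 hw01 hw02 hw12 (value h0) (value h1) (value h2)
  have hAz (z : Option ℂ) := mulVec_ne_zero_of_det_ne_zero hdet (homog_ne_zero z)
  exact ⟨A, ψ, hdet, value h0 (hAz z0), value h1 (hAz z1), value h2 (hAz z2), hlim⟩

lemma proj_mulVec_smul {t : ℂ} (ht : t ≠ 0) (A : Matrix (Fin 2) (Fin 2) ℂ) (u : Fin 2 → ℂ) :
    proj (A *ᵥ (t • u)) = proj (A *ᵥ u) := by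
  rw [mulVec_smul]
  exact proj_smul ht _

lemma eventually_forall_chordal_lt {ι : Type*} {l : Filter ι} {F : ι → Matrix (Fin 2) (Fin 2) ℂ}
    {A : Matrix (Fin 2) (Fin 2) ℂ} (hF : Tendsto F l (𝓝 A)) (hA : A.det ≠ 0) {ε : ℝ}
    (hε : 0 < ε) : ∀ᶠ i in l, ∀ z, chordal (moebiusOfMatrix (F i) z) (moebiusOfMatrix A z) < ε := by
  have hK : ∀ᶠ B in 𝓝 A, ∀ u ∈ Metric.sphere (0 : Fin 2 → ℂ) 1,
      chordal (proj (B *ᵥ u)) (proj (A *ᵥ u)) < ε := by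
    refine (isCompact_sphere _ _).eventually_forall_of_forall_eventually fun u hu => ?_
    have hu0 : u ≠ 0 := ne_zero_of_mem_unit_sphere ⟨u, hu⟩
    have hAu := mulVec_ne_zero_of_det_ne_zero hA hu0
    have hcont := (continuousAt_chordal_proj hAu hAu).comp (x := (A, u))
      (f := fun p : Matrix (Fin 2) (Fin 2) ℂ × (Fin 2 → ℂ) => (p.1 *ᵥ p.2, A *ᵥ p.2)) (by fun_prop)
    exact hcont.eventually_lt continuousAt_const
      (show chordal (proj (A *ᵥ u)) (proj (A *ᵥ u)) < ε by rwa [chordal_self])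
  filter_upwards [hF.eventually hK] with i hi z
  have hz := homog_ne_zero z
  have hc : (‖homog z‖ : ℂ)⁻¹ ≠ 0 := by simpa using hz
  have hu : (‖homog z‖ : ℂ)⁻¹ • homog z ∈ Metric.sphere (0 : Fin 2 → ℂ) 1 :=
    mem_sphere_zero_iff_norm.2 (norm_smul_inv_norm hz)
  have := hi _ hu
  rwa [proj_mulVec_smul hc, proj_mulVec_smul hc] at this

lemma eventually_atTop_of_forall_strictMono {P : ℕ → Prop}
    (h : ∀ φ : ℕ → ℕ, StrictMono φ → ∃ n, P (φ n)) : ∀ᶠ n in atTop, P n := by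
  by_contra hP
  obtain ⟨φ, hφ, hφP⟩ := extraction_of_frequently_atTop (not_eventually.1 hP)
  obtain ⟨n, hn⟩ := h φ hφ
  exact hφP n hn

/-- if a sequence of Möbius transformations converges (in the chordal
metric) at three fixed distinct points to three distinct limits, then it converges
uniformly on the whole sphere (hence locally uniformly) to the unique Möbius
transformation sending the three points to the three limits. -/
theorem moebius_three_point_convergence
    (M : ℕ → Option ℂ → Option ℂ) (hM : ∀ n, IsMoebius (M n))
    (z0 z1 z2 w0 w1 w2 : Option ℂ)
    (hz01 : z0 ≠ z1) (hz02 : z0 ≠ z2) (hz12 : z1 ≠ z2)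
    (hw01 : w0 ≠ w1) (hw02 : w0 ≠ w2) (hw12 : w1 ≠ w2)
    (h0 : Filter.Tendsto (fun n => chordal (M n z0) w0) Filter.atTop (nhds 0))
    (h1 : Filter.Tendsto (fun n => chordal (M n z1) w1) Filter.atTop (nhds 0))
    (h2 : Filter.Tendsto (fun n => chordal (M n z2) w2) Filter.atTop (nhds 0)) :
    ∃ L : Option ℂ → Option ℂ, IsMoebius L ∧
      L z0 = w0 ∧ L z1 = w1 ∧ L z2 = w2 ∧
      (∀ L' : Option ℂ → Option ℂ, IsMoebius L' →
        L' z0 = w0 → L' z1 = w1 → L' z2 = w2 → L' = L) ∧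
      ∀ ε : ℝ, 0 < ε → ∃ N : ℕ, ∀ n ≥ N, ∀ z, chordal (M n z) (L z) < ε := by
  choose G hG1 hMG using fun n => (hM n).exists_norm_eq_one
  obtain rfl : M = fun n => moebiusOfMatrix (G n) := funext hMG
  have limit (φ : ℕ → ℕ) (hφ : StrictMono φ) := exists_subseq_tendsto_of_three_points
    (fun n => hG1 (φ n)) hz01 hz02 hz12 hw01 hw02 hw12 (h0.comp hφ.tendsto_atTop)
    (h1.comp hφ.tendsto_atTop) (h2.comp hφ.tendsto_atTop)
  obtain ⟨A, -, hA, e0, e1, e2, -⟩ := limit id strictMono_id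
  have unique {B : Matrix (Fin 2) (Fin 2) ℂ} (hB : B.det ≠ 0) (f0 : moebiusOfMatrix B z0 = w0)
      (f1 : moebiusOfMatrix B z1 = w1) (f2 : moebiusOfMatrix B z2 = w2) :
      moebiusOfMatrix B = moebiusOfMatrix A :=
    moebiusOfMatrix_eq_of_eq_on_three hB hA hz01 hz02 hz12 (f0.trans e0.symm)
      (f1.trans e1.symm) (f2.trans e2.symm)
  refine ⟨moebiusOfMatrix A, isMoebius_iff.2 ⟨A, hA, rfl⟩, e0, e1, e2, ?_, fun ε hε => ?_⟩
  · rintro L' hL' f0 f1 f2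
    obtain ⟨B, hB, rfl⟩ := isMoebius_iff.1 hL'
    exact unique hB f0 f1 f2
  · refine eventually_atTop.1 (eventually_atTop_of_forall_strictMono fun φ hφ => ?_)
    obtain ⟨B, ψ, hB, f0, f1, f2, hlim⟩ := limit φ hφ
    obtain ⟨k, hk⟩ := (eventually_forall_chordal_lt hlim hB hε).exists
    exact ⟨ψ k, by rwa [unique hB f0 f1 f2] at hk⟩

end
end

section
/- Let (f_n : P¹(ℂ) → P¹(ℂ)) be a sequence of rational maps all of the same degree d ≥ 1. Then there exist a subsequence (f_{n_k}) and Möbius transformations (M_{n_k}) such that M_{n_k} ∘ f_{n_k} converges, uniformly on compact subsets of the complement of a finite set of points of P¹(ℂ), to a nonconstant rational map f. -/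
noncomputable section

/-- The topology of the one-point compactification on `Option ℂ = P¹(ℂ)`. -/
instance : TopologicalSpace (Option ℂ) :=
  inferInstanceAs (TopologicalSpace (OnePoint ℂ))

/-- The rational map `p/q` on the Riemann sphere `P¹(ℂ) = Option ℂ`. -/
def ratMap (p q : Polynomial ℂ) : Option ℂ → Option ℂ :=
  fun z => z.elim
    (if q.natDegree < p.natDegree then none
     else if p.natDegree < q.natDegree then some 0
     else some (p.leadingCoeff / q.leadingCoeff))
    (fun w => if q.eval w = 0 then none else some (p.eval w / q.eval w))

/-!
Write `f_n = p_n / q_n` and read the coefficients of `p_n` and `q_n` as two vectors of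
`ℂ^{d+1}`; coprimality and `d ≥ 1` make them linearly independent. Post-composing `f_n` with
the Möbius map of matrix `T` replaces this pair by its image under `T`, so by Gram–Schmidt we
may assume it is orthonormal. Orthonormal pairs form a compact set, hence along a subsequence
they converge to an orthonormal pair `(P₀, Q₀)`, again linearly independent, so that `P₀ / Q₀`,
reduced by `gcd P₀ Q₀`, is a nonconstant rational map. The quotients converge to `P₀ / Q₀`
uniformly on compact sets avoiding `∞` and the zeros of `Q₀`, and the chordal metric on `ℂ` is
at most twice the Euclidean one.
-/

open Polynomial Filter Topology Set

lemma chordal_some_some_le (x y : ℂ) : chordal (some x) (some y) ≤ 2 * dist x y := by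
  have hx : 1 ≤ √(1 + ‖x‖ ^ 2) := Real.one_le_sqrt.2 (le_add_of_nonneg_right (by positivity))
  have hy : 1 ≤ √(1 + ‖y‖ ^ 2) := Real.one_le_sqrt.2 (le_add_of_nonneg_right (by positivity))
  rw [dist_eq_norm]
  exact div_le_self (by positivity) (one_le_mul_of_one_le_of_one_le hx hy)

lemma ratMap_some {p q : ℂ[X]} {w : ℂ} (hw : q.eval w ≠ 0) :
    ratMap p q (some w) = some (p.eval w / q.eval w) := by
  simp [ratMap, hw]

lemma ratMap_some_eq_div_mul {p q : ℂ[X]} (g : ℂ[X]) {w : ℂ} (hw : (g * q).eval w ≠ 0) :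
    ratMap p q (some w) = some ((g * p).eval w / (g * q).eval w) := by
  rw [eval_mul] at hw
  rw [ratMap_some (right_ne_zero_of_mul hw), eval_mul, eval_mul,
    mul_div_mul_left _ _ (left_ne_zero_of_mul hw)]

lemma moebiusMap_ratMap_some {p q : ℂ[X]} {a b c d w : ℂ} (hw : (c • p + d • q).eval w ≠ 0) :
    moebiusMap a b c d (ratMap p q (some w)) =
      some ((a • p + b • q).eval w / (c • p + d • q).eval w) := by
  simp only [eval_add, eval_smul, smul_eq_mul] at hw ⊢
  by_cases hq : q.eval w = 0
  · rw [hq, mul_zero, add_zero] at hw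
    simp [ratMap, moebiusMap, hq, left_ne_zero_of_mul hw,
      mul_div_mul_right _ _ (right_ne_zero_of_mul hw)]
  · have hden : c * (p.eval w / q.eval w) + d ≠ 0 := by
      rwa [mul_div_assoc', div_add' _ _ _ hq, div_ne_zero_iff, and_iff_left hq]
    simp only [ratMap_some hq, moebiusMap, Option.elim, if_neg hden]
    congr 1
    field_simp

section Polynomials

variable {K : Type*} [Field K] {p q : K[X]}

lemma one_le_max_natDegree_of_linearIndependent (h : LinearIndependent K ![p, q]) :
    1 ≤ max p.natDegree q.natDegree := by
  by_contra! hdeg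
  obtain ⟨a, rfl⟩ : ∃ a, p = C a := ⟨_, eq_C_of_natDegree_eq_zero (by omega)⟩
  obtain ⟨b, rfl⟩ : ∃ b, q = C b := ⟨_, eq_C_of_natDegree_eq_zero (by omega)⟩
  obtain ⟨rfl, -⟩ := LinearIndependent.pair_iff.1 h b (-a) (by simp [smul_eq_C_mul, mul_comm])
  simpa using h.ne_zero 1

lemma IsCoprime.natDegree_eq_zero_of_smul_add_smul_eq_zero (h : IsCoprime p q) {s t : K}
    (ht : t ≠ 0) (hst : s • p + t • q = 0) : p.natDegree = 0 ∧ q.natDegree = 0 := by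
  have hq : q = C (-s / t) * p := by
    rw [← smul_eq_C_mul]
    refine smul_right_injective _ ht ?_
    simp only [smul_smul, mul_div_cancel₀ _ ht]
    linear_combination (norm := module) hst
  have hp : p.natDegree = 0 :=
    natDegree_eq_zero_of_isUnit (h.isUnit_of_dvd' dvd_rfl (hq ▸ dvd_mul_left p _))
  exact ⟨hp, Nat.le_zero.1 (hq ▸ (natDegree_C_mul_le _ _).trans hp.le)⟩

lemma IsCoprime.linearIndependent_pair (h : IsCoprime p q)
    (hdeg : 1 ≤ max p.natDegree q.natDegree) : LinearIndependent K ![p, q] := by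
  refine LinearIndependent.pair_iff.2 fun s t hst => ?_
  by_contra! hne
  obtain ⟨hp, hq⟩ : p.natDegree = 0 ∧ q.natDegree = 0 := by
    by_cases ht : t = 0
    · exact (h.symm.natDegree_eq_zero_of_smul_add_smul_eq_zero (fun hs => hne hs ht)
        (by rwa [add_comm])).symm
    · exact h.natDegree_eq_zero_of_smul_add_smul_eq_zero ht hst
  omega

lemma exists_isCoprime_of_linearIndependent {P₀ Q₀ : K[X]}
    (h : LinearIndependent K ![P₀, Q₀]) :
    ∃ g P Q : K[X], P₀ = g * P ∧ Q₀ = g * Q ∧ IsCoprime P Q ∧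
      1 ≤ max P.natDegree Q.natDegree := by
  classical
  obtain ⟨P, Q, hP, hQ, hgcd⟩ := extract_gcd P₀ Q₀
  refine ⟨_, P, Q, hP, hQ, (gcd_isUnit_iff_isRelPrime.1 hgcd).isCoprime,
    one_le_max_natDegree_of_linearIndependent (.of_comp (LinearMap.mulLeft K (gcd P₀ Q₀)) ?_)⟩
  rwa [show LinearMap.mulLeft K (gcd P₀ Q₀) ∘ ![P, Q] = ![P₀, Q₀] by
    ext i : 1; fin_cases i <;> simp [← hP, ← hQ]]

end Polynomials

section CoefficientVectors

variable {𝕜 : Type*} [RCLike 𝕜] (d : ℕ)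

def polyOfCoeffs : EuclideanSpace 𝕜 (Fin (d + 1)) →ₗ[𝕜] 𝕜[X] :=
  Fintype.linearCombination 𝕜 (fun i : Fin (d + 1) => (X : 𝕜[X]) ^ (i : ℕ)) ∘ₗ
    (WithLp.linearEquiv 2 𝕜 _).toLinearMap

variable {d}

lemma polyOfCoeffs_apply (v : EuclideanSpace 𝕜 (Fin (d + 1))) :
    polyOfCoeffs d v = ∑ i, v i • (X : 𝕜[X]) ^ (i : ℕ) :=
  rfl

lemma coeff_polyOfCoeffs (v : EuclideanSpace 𝕜 (Fin (d + 1))) (i : Fin (d + 1)) :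
    (polyOfCoeffs d v).coeff i = v i := by
  simp [polyOfCoeffs_apply, coeff_X_pow, Fin.val_inj]

lemma ker_polyOfCoeffs : LinearMap.ker (polyOfCoeffs (𝕜 := 𝕜) d) = ⊥ :=
  LinearMap.ker_eq_bot.2 fun v w h => by
    ext i
    rw [← coeff_polyOfCoeffs, h, coeff_polyOfCoeffs]

lemma exists_polyOfCoeffs_eq {p : 𝕜[X]} (hp : p.natDegree ≤ d) :
    ∃ v, polyOfCoeffs d v = p := by
  refine ⟨WithLp.toLp 2 fun i => p.coeff i, ?_⟩
  conv_rhs => rw [as_sum_range' p (d + 1) (Nat.lt_succ_of_le hp)]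
  simp [polyOfCoeffs_apply, ← Fin.sum_univ_eq_sum_range, smul_X_eq_monomial]

lemma linearIndependent_polyOfCoeffs_pair_iff {v : Fin 2 → EuclideanSpace 𝕜 (Fin (d + 1))} :
    LinearIndependent 𝕜 ![polyOfCoeffs d (v 0), polyOfCoeffs d (v 1)] ↔
      LinearIndependent 𝕜 v := by
  rw [← LinearMap.linearIndependent_iff _ ker_polyOfCoeffs]
  congr!
  ext i : 1
  fin_cases i <;> rfl

lemma continuous_eval_polyOfCoeffs_apply {ι : Type*} (i : ι) :
    Continuous ↿fun (v : ι → EuclideanSpace 𝕜 (Fin (d + 1))) (w : 𝕜) =>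
      (polyOfCoeffs d (v i)).eval w := by
  simp only [Function.HasUncurry.uncurry, polyOfCoeffs_apply, eval_finsetSum, eval_smul,
    eval_pow, eval_X, smul_eq_mul]
  fun_prop

end CoefficientVectors

section Orthonormal

variable (𝕜 : Type*) {E : Type*} [RCLike 𝕜] [NormedAddCommGroup E] [InnerProductSpace 𝕜 E]

lemma isClosed_setOf_orthonormal (ι : Type*) : IsClosed {v : ι → E | Orthonormal 𝕜 v} := by
  classical
  simp only [orthonormal_iff_ite, ofPred_forall]
  exact isClosed_iInter fun i => isClosed_iInter fun j =>
    isClosed_eq (by fun_prop) continuous_const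

lemma isCompact_setOf_orthonormal [ProperSpace E] (ι : Type*) :
    IsCompact {v : ι → E | Orthonormal 𝕜 v} :=
  (isCompact_univ_pi fun _ => isCompact_closedBall 0 1).of_isClosed_subset
    (isClosed_setOf_orthonormal 𝕜 ι) fun _ hv i _ => by simp [hv.1 i]

variable {𝕜}

lemma LinearIndependent.exists_orthonormal_combination {v₁ v₂ : E}
    (h : LinearIndependent 𝕜 ![v₁, v₂]) :
    ∃ a b c d : 𝕜, a * d - b * c ≠ 0 ∧ Orthonormal 𝕜 ![a • v₁ + b • v₂, c • v₁ + d • v₂] := by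
  set u := InnerProductSpace.gramSchmidtNormed 𝕜 ![v₁, v₂]
  have hspan (i : Fin 2) : u i ∈ Submodule.span 𝕜 {v₁, v₂} := by
    rw [← Matrix.range_cons_cons_empty, ← InnerProductSpace.span_gramSchmidt 𝕜,
      ← InnerProductSpace.span_gramSchmidtNormed_range]
    exact Submodule.subset_span (mem_range_self i)
  obtain ⟨a, b, hab⟩ := Submodule.mem_span_pair.1 (hspan 0)
  obtain ⟨c, d, hcd⟩ := Submodule.mem_span_pair.1 (hspan 1)
  have hu : Orthonormal 𝕜 ![a • v₁ + b • v₂, c • v₁ + d • v₂] := by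
    convert InnerProductSpace.gramSchmidtNormed_orthonormal h using 1
    ext i : 1
    fin_cases i <;> simp [hab, hcd, u]
  refine ⟨a, b, c, d, fun hdet => ?_, hu⟩
  have hind := LinearIndependent.pair_iff.1 hu.linearIndependent
  have hdb := hind d (-b) (by linear_combination (norm := module) hdet • v₁)
  have hca := hind c (-a) (by linear_combination (norm := module) (-hdet) • v₂)
  simp only [neg_eq_zero] at hdb hca
  obtain ⟨rfl, rfl⟩ := hdb
  obtain ⟨rfl, rfl⟩ := hca
  simpa using hu.ne_zero 0

end Orthonormal

lemma exists_moebius_orthonormal_normalization {d : ℕ} {p q : ℂ[X]} (hpq : IsCoprime p q)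
    (hp : p.natDegree ≤ d) (hq : q.natDegree ≤ d) (hdeg : 1 ≤ max p.natDegree q.natDegree) :
    ∃ (M : Option ℂ → Option ℂ) (u : Fin 2 → EuclideanSpace ℂ (Fin (d + 1))),
      IsMoebius M ∧ Orthonormal ℂ u ∧ ∀ w : ℂ, (polyOfCoeffs d (u 1)).eval w ≠ 0 →
        M (ratMap p q (some w)) =
          some ((polyOfCoeffs d (u 0)).eval w / (polyOfCoeffs d (u 1)).eval w) := by
  obtain ⟨v₁, rfl⟩ := exists_polyOfCoeffs_eq hp
  obtain ⟨v₂, rfl⟩ := exists_polyOfCoeffs_eq hq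
  have hv : LinearIndependent ℂ ![v₁, v₂] :=
    linearIndependent_polyOfCoeffs_pair_iff.1 (hpq.linearIndependent_pair hdeg)
  obtain ⟨a, b, c, e, hdet, hu⟩ := hv.exists_orthonormal_combination
  refine ⟨moebiusMap a b c e, _, ⟨a, b, c, e, hdet, rfl⟩, hu, fun w hw => ?_⟩
  simp only [Matrix.cons_val_zero, Matrix.cons_val_one, map_add, map_smul] at hw ⊢
  exact moebiusMap_ratMap_some hw

lemma IsCompact.eventually_forall_dist_div_lt {X Y 𝕜 : Type*} [TopologicalSpace X]
    [TopologicalSpace Y] [NormedField 𝕜] {F G : X → Y → 𝕜} (hF : Continuous ↿F)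
    (hG : Continuous ↿G) {S : Set Y} (hS : IsCompact S) {x₀ : X} (hG₀ : ∀ y ∈ S, G x₀ y ≠ 0)
    {ε : ℝ} (hε : 0 < ε) :
    ∀ᶠ x in 𝓝 x₀, ∀ y ∈ S, G x y ≠ 0 ∧ dist (F x y / G x y) (F x₀ y / G x₀ y) < ε := by
  set N := {x | ∀ y ∈ S, G x y ≠ 0}
  have hN : N ∈ 𝓝 x₀ := hS.eventually_forall_of_forall_eventually fun y hy =>
    hG.continuousAt.eventually_ne (hG₀ y hy)
  have hcont : ContinuousOn (Function.uncurry fun x y => F x y / G x y) (N ×ˢ S) :=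
    fun z hz => (hF.continuousAt.div hG.continuousAt (hz.1 z.2 hz.2)).continuousWithinAt
  obtain ⟨V, hV, hVS⟩ := hS.mem_uniformity_of_prod hcont (mem_of_mem_nhds hN)
    (Metric.dist_mem_uniformity hε)
  rw [nhdsWithin_eq_nhds.2 hN] at hV
  filter_upwards [hN, hV] with x hxN hxV y hy using ⟨hxN y hy, hVS x hxV y hy⟩

lemma isCompact_preimage_some {K : Set (Option ℂ)} (hK : IsCompact K) (h : none ∉ K) :
    IsCompact (some ⁻¹' K) :=
  (OnePoint.isOpenEmbedding_coe.isInducing.isCompact_preimage_iff fun _ hz =>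
    Option.ne_none_iff_exists.1 (ne_of_mem_of_not_mem hz h)).2 hK

/-- every sequence of rational maps of a fixed degree `d ≥ 1` admits a
subsequence and a sequence of Möbius transformations `M k` such that `M k ∘ f (n k)`
converges, uniformly (for the chordal metric) on compact subsets avoiding a finite set
`E`, to a nonconstant rational map. -/
theorem rescaling_limit_of_rational_maps (d : ℕ) (hd : 1 ≤ d)
    (p q : ℕ → Polynomial ℂ) (hco : ∀ n, IsCoprime (p n) (q n))
    (hdeg : ∀ n, max (p n).natDegree (q n).natDegree = d) :
    ∃ nk : ℕ → ℕ, StrictMono nk ∧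
    ∃ M : ℕ → Option ℂ → Option ℂ, (∀ k, IsMoebius (M k)) ∧
    ∃ P Q : Polynomial ℂ, IsCoprime P Q ∧ 1 ≤ max P.natDegree Q.natDegree ∧
    ∃ E : Set (Option ℂ), E.Finite ∧
      ∀ K : Set (Option ℂ), IsCompact K → Disjoint K E →
        ∀ ε : ℝ, 0 < ε → ∃ N : ℕ, ∀ k ≥ N, ∀ z ∈ K,
          chordal (M k (ratMap (p (nk k)) (q (nk k)) z)) (ratMap P Q z) < ε := by
  choose M u hM hu hMu using fun n => exists_moebius_orthonormal_normalization (hco n)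
    (hdeg n ▸ le_max_left _ _) (hdeg n ▸ le_max_right _ _) (hd.trans (hdeg n).ge)
  obtain ⟨U, hU, φ, hφ, hlim⟩ := (isCompact_setOf_orthonormal ℂ (Fin 2)).tendsto_subseq hu
  have hind := linearIndependent_polyOfCoeffs_pair_iff.2 hU.linearIndependent
  obtain ⟨g, P, Q, hP, hQ, hPQ, hPQdeg⟩ := exists_isCoprime_of_linearIndependent hind
  refine ⟨φ, hφ, M ∘ φ, fun k => hM (φ k), P, Q, hPQ, hPQdeg,
    insert none (some '' {w | (polyOfCoeffs d (U 1)).IsRoot w}),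
    ((finite_setOfPred_isRoot (hind.ne_zero 1)).image _).insert _, fun K hK hKE ε hε => ?_⟩
  have hKnone : none ∉ K := fun h => disjoint_left.1 hKE h (mem_insert _ _)
  have hK₀ (w : ℂ) (hw : some w ∈ K) : (polyOfCoeffs d (U 1)).eval w ≠ 0 := fun h =>
    disjoint_left.1 hKE hw (mem_insert_of_mem _ ⟨w, h, rfl⟩)
  obtain ⟨N, hN⟩ := eventually_atTop.1 <| hlim.eventually <|
    (isCompact_preimage_some hK hKnone).eventually_forall_dist_div_lt
      (continuous_eval_polyOfCoeffs_apply 0) (continuous_eval_polyOfCoeffs_apply 1) hK₀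
      (half_pos hε)
  simp only [Function.comp_apply] at hN
  refine ⟨N, fun k hk z hz => ?_⟩
  obtain ⟨w, rfl⟩ := Option.ne_none_iff_exists'.1 (ne_of_mem_of_not_mem hz hKnone)
  obtain ⟨hne, hdist⟩ := hN k hk w hz
  rw [Function.comp_apply, hMu _ w hne, ratMap_some_eq_div_mul g (hQ ▸ hK₀ w hz), ← hP, ← hQ]
  exact (chordal_some_some_le _ _).trans_lt (by linarith)

end
end
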